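/- arXiv:1802.03981 — 2 statements merged into one kernel-verified Lean document; each statement's English description precedes it below -/
import Mathlib

section
/- Let A be an n×n complex matrix, p(x) = Σ_{j=0}^{τ} c_j x^{τ-j} a monic polynomial (c_0 = 1) with p(A) = 0, and B, C matrices of compatible dimensions. Define y_t = Σ_{i=0}^{t-1} C A^i B x_{t-i} for a sequence of input vectors x_1, …, x_T. Then for every t > τ, y_t = -Σ_{j=1}^{τ} c_j y_{t-j} + Σ_{i=0}^{τ-1} P_i x_{t-i}, where P_i = Σ_{j=0}^{i} c_j C A^{i-j} B. -/
private lemma my_sum_mulVec {ι p m : Type*} [Fintype m] (s : Finset ι)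
    (f : ι → Matrix p m ℂ) (v : m → ℂ) :
    (∑ i ∈ s, f i).mulVec v = ∑ i ∈ s, (f i).mulVec v := by
  induction s using Finset.cons_induction with
  | empty => simp [Matrix.zero_mulVec]
  | cons a s ha ih => simp [Finset.sum_cons, Matrix.add_mulVec, ih]

theorem lds_autoregressive_representation
    (n m p T τ : ℕ)
    (A : Matrix (Fin n) (Fin n) ℂ)
    (B : Matrix (Fin n) (Fin m) ℂ)
    (C : Matrix (Fin p) (Fin n) ℂ)
    (c : ℕ → ℂ) (hc0 : c 0 = 1)
    (hp : (∑ j ∈ Finset.range (τ + 1), c j • A ^ (τ - j)) = 0)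
    (x : ℕ → Fin m → ℂ)
    (y : ℕ → Fin p → ℂ)
    (hy : ∀ t, y t = ∑ i ∈ Finset.range t, (C * A ^ i * B).mulVec (x (t - i)))
    (P : ℕ → Matrix (Fin p) (Fin m) ℂ)
    (hP : ∀ i, P i = ∑ j ∈ Finset.range (i + 1), c j • (C * A ^ (i - j) * B)) :
    ∀ t, τ < t → t ≤ T →
      y t = -(∑ j ∈ Finset.Icc 1 τ, c j • y (t - j))
            + ∑ i ∈ Finset.range τ, (P i).mulVec (x (t - i)) := by
  intro t ht hT
  have key : (∑ j ∈ Finset.range (τ + 1), c j • y (t - j))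
      = ∑ i ∈ Finset.range τ, (P i).mulVec (x (t - i)) := by
    have h1 : (∑ j ∈ Finset.range (τ + 1), c j • y (t - j))
        = ∑ j ∈ Finset.range (τ + 1), ∑ k ∈ Finset.Ico j t,
            c j • (C * A ^ (k - j) * B).mulVec (x (t - k)) := by
      refine Finset.sum_congr rfl fun j hj => ?_
      rw [hy, Finset.smul_sum, Finset.sum_Ico_eq_sum_range]
      simp only [Nat.add_sub_cancel_left, Nat.sub_sub]
    have h2 : (∑ j ∈ Finset.range (τ + 1), c j • y (t - j))
        = ∑ k ∈ Finset.range t, ∑ j ∈ Finset.range (min k τ + 1),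
            c j • (C * A ^ (k - j) * B).mulVec (x (t - k)) := by
      rw [h1]
      refine Finset.sum_comm' ?_
      intro j k
      simp only [Finset.mem_range, Finset.mem_Ico]
      omega
    rw [h2, ← Finset.sum_range_add_sum_Ico _ (le_of_lt ht)]
    have hzero : ∀ k ∈ Finset.Ico τ t,
        (∑ j ∈ Finset.range (min k τ + 1),
          c j • (C * A ^ (k - j) * B).mulVec (x (t - k))) = 0 := by
      intro k hk
      rw [Finset.mem_Ico] at hk
      have hmin : min k τ = τ := by omega
      rw [hmin]
      have hz : (∑ j ∈ Finset.range (τ + 1), c j • (C * A ^ (k - j) * B)) = 0 := by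
        have heq : (∑ j ∈ Finset.range (τ + 1), c j • (C * A ^ (k - j) * B))
            = C * ((∑ j ∈ Finset.range (τ + 1), c j • A ^ (τ - j)) * A ^ (k - τ)) * B := by
          rw [Finset.sum_mul, Matrix.mul_sum, Matrix.sum_mul]
          refine Finset.sum_congr rfl fun j hj => ?_
          rw [Finset.mem_range] at hj
          have hpow : A ^ (τ - j) * A ^ (k - τ) = A ^ (k - j) := by
            rw [← pow_add]; congr 1; omega
          rw [smul_mul_assoc, hpow, Matrix.mul_smul, Matrix.smul_mul]
        rw [heq, hp, Matrix.zero_mul, Matrix.mul_zero, Matrix.zero_mul]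
      calc (∑ j ∈ Finset.range (τ + 1), c j • (C * A ^ (k - j) * B).mulVec (x (t - k)))
          = (∑ j ∈ Finset.range (τ + 1), c j • (C * A ^ (k - j) * B)).mulVec (x (t - k)) := by
            rw [my_sum_mulVec]
            exact Finset.sum_congr rfl fun j _ => (Matrix.smul_mulVec _ _ _).symm
        _ = 0 := by rw [hz, Matrix.zero_mulVec]
    rw [Finset.sum_eq_zero hzero, add_zero]
    refine Finset.sum_congr rfl fun k hk => ?_
    rw [Finset.mem_range] at hk
    have hmin : min k τ = k := by omega
    rw [hmin, hP, my_sum_mulVec]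
    exact Finset.sum_congr rfl fun j _ => (Matrix.smul_mulVec _ _ _).symm
  have hsplit : (∑ j ∈ Finset.range (τ + 1), c j • y (t - j))
      = y t + ∑ j ∈ Finset.Icc 1 τ, c j • y (t - j) := by
    rw [Finset.sum_range_succ']
    have heq : (∑ j ∈ Finset.Icc 1 τ, c j • y (t - j))
        = ∑ i ∈ Finset.range τ, c (i + 1) • y (t - (i + 1)) := by
      rw [show Finset.Icc 1 τ = Finset.Ico 1 (τ + 1) by rfl, Finset.sum_Ico_eq_sum_range]
      simp [Nat.add_comm]
    rw [heq, hc0, one_smul, Nat.sub_zero, add_comm]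
  rw [hsplit] at key
  have hfin : y t = (∑ i ∈ Finset.range τ, (P i).mulVec (x (t - i)))
      - ∑ j ∈ Finset.Icc 1 τ, c j • y (t - j) := by
    rw [← key]; abel
  rw [hfin]; abel
end

section
/- Under the hypotheses of the autoregressive representation theorem (A diagonalizable with ‖Λ‖₂ ≤ 1, ‖B‖₂, ‖C‖₂ ≤ R_Θ, ‖Ψ‖_F‖Ψ^{-1}‖_F ≤ R_Ψ, and monic p with p(A) = 0 of degree τ with ‖p‖₁ ≤ R₁), the matrices P_i = Σ_{j=0}^{i} c_j C A^{i-j} B for 0 ≤ i ≤ τ-1 satisfy ‖P_i‖_F ≤ R₁ R_Θ² R_Ψ. -/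
/-!
Write `A ^ k = Ψ Λ ^ k Ψ⁻¹`. Since `‖X Y‖_F ≤ ‖X‖₂ ‖Y‖_F` (column by column) and symmetrically
`‖X Y‖_F ≤ ‖X‖_F ‖Y‖₂`, every Markov parameter satisfies
`‖C A ^ k B‖_F ≤ ‖C‖₂ ‖Ψ‖_F ‖Λ ^ k‖₂ ‖Ψ⁻¹‖_F ‖B‖₂ ≤ R_Θ² R_Ψ`, uniformly in `k`.
The matrix `P_i` is a combination of such parameters whose coefficients have `ℓ¹` norm at most
`‖p‖₁ ≤ R₁`.
-/

/-- The Frobenius norm of a complex matrix. -/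
noncomputable def frobNorm {p q : ℕ} (M : Matrix (Fin p) (Fin q) ℂ) : ℝ :=
  Real.sqrt (∑ i, ∑ j, ‖M i j‖ ^ 2)

/-- The spectral (ℓ²-operator) norm of a complex matrix. -/
noncomputable def specNorm {p q : ℕ} (M : Matrix (Fin p) (Fin q) ℂ) : ℝ :=
  ‖LinearMap.toContinuousLinearMap (Matrix.toEuclideanLin M)‖

open scoped Matrix

variable {a b d e : ℕ}

theorem norm_sum_smul_le_of_norm_le {𝕜 E ι : Type*} [NormedField 𝕜] [SeminormedAddCommGroup E]
    [NormedSpace 𝕜 E] (s : Finset ι) (c : ι → 𝕜) (v : ι → E) {K : ℝ}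
    (hv : ∀ j ∈ s, ‖v j‖ ≤ K) : ‖∑ j ∈ s, c j • v j‖ ≤ (∑ j ∈ s, ‖c j‖) * K :=
  calc ‖∑ j ∈ s, c j • v j‖ ≤ ∑ j ∈ s, ‖c j‖ * ‖v j‖ := by
        simpa only [norm_smul] using norm_sum_le s fun j => c j • v j
    _ ≤ ∑ j ∈ s, ‖c j‖ * K := by gcongr with j hj; exact hv j hj
    _ = (∑ j ∈ s, ‖c j‖) * K := (Finset.sum_mul ..).symm

section Frobenius

attribute [local instance] Matrix.frobeniusNormedAddCommGroup Matrix.frobeniusNormedSpace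


theorem frobNorm_eq_norm (M : Matrix (Fin a) (Fin b) ℂ) : frobNorm M = ‖M‖ := by
  simp only [frobNorm, Matrix.frobenius_norm_def, Real.sqrt_eq_rpow, Real.rpow_two]

theorem frobNorm_nonneg (M : Matrix (Fin a) (Fin b) ℂ) : 0 ≤ frobNorm M :=
  Real.sqrt_nonneg _

theorem frobNorm_sq (M : Matrix (Fin a) (Fin b) ℂ) : frobNorm M ^ 2 = ∑ i, ∑ j, ‖M i j‖ ^ 2 :=
  Real.sq_sqrt (by positivity)

theorem frobNorm_conjTranspose (M : Matrix (Fin a) (Fin b) ℂ) : frobNorm Mᴴ = frobNorm M := by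
  simp only [frobNorm_eq_norm, Matrix.frobenius_norm_conjTranspose]

theorem frobNorm_mul_le (M : Matrix (Fin a) (Fin b) ℂ) (N : Matrix (Fin b) (Fin d) ℂ) :
    frobNorm (M * N) ≤ frobNorm M * frobNorm N := by
  simpa only [frobNorm_eq_norm] using Matrix.frobenius_norm_mul M N

theorem frobNorm_sum_smul_le_of_frobNorm_le {ι : Type*} (s : Finset ι) (c : ι → ℂ)
    (M : ι → Matrix (Fin a) (Fin b) ℂ) {K : ℝ} (hM : ∀ j ∈ s, frobNorm (M j) ≤ K) :
    frobNorm (∑ j ∈ s, c j • M j) ≤ (∑ j ∈ s, ‖c j‖) * K := by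
  simp only [frobNorm_eq_norm] at hM ⊢
  exact norm_sum_smul_le_of_norm_le s c M hM

end Frobenius

section Spectral

open scoped Matrix.Norms.L2Operator


theorem specNorm_eq_norm (M : Matrix (Fin a) (Fin b) ℂ) : specNorm M = ‖M‖ := rfl

theorem specNorm_nonneg (M : Matrix (Fin a) (Fin b) ℂ) : 0 ≤ specNorm M :=
  norm_nonneg _

theorem specNorm_conjTranspose (M : Matrix (Fin a) (Fin b) ℂ) : specNorm Mᴴ = specNorm M :=
  Matrix.l2_opNorm_conjTranspose M

theorem specNorm_pow_le_one {Λ : Matrix (Fin a) (Fin a) ℂ} (hΛ : specNorm Λ ≤ 1) (k : ℕ) :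
    specNorm (Λ ^ k) ≤ 1 := by
  rcases Nat.eq_zero_or_pos k with rfl | hk
  · rw [pow_zero, specNorm_eq_norm, Matrix.cstar_norm_def, map_one]
    exact ContinuousLinearMap.norm_id_le
  · exact (norm_pow_le' Λ hk).trans (pow_le_one₀ (specNorm_nonneg Λ) hΛ)

theorem sum_norm_mulVec_sq_le (M : Matrix (Fin a) (Fin b) ℂ) (x : Fin b → ℂ) :
    ∑ i, ‖(M *ᵥ x) i‖ ^ 2 ≤ specNorm M ^ 2 * ∑ j, ‖x j‖ ^ 2 := by
  have h := pow_le_pow_left₀ (norm_nonneg _) (Matrix.l2_opNorm_mulVec M (WithLp.toLp 2 x)) 2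
  simpa only [specNorm_eq_norm, PiLp.continuousLinearEquiv_symm_apply, EuclideanSpace.norm_sq_eq,
    mul_pow] using h

end Spectral


theorem frobNorm_mul_le_specNorm_mul (M : Matrix (Fin a) (Fin b) ℂ)
    (N : Matrix (Fin b) (Fin d) ℂ) : frobNorm (M * N) ≤ specNorm M * frobNorm N := by
  refine le_of_sq_le_sq ?_ (mul_nonneg (specNorm_nonneg M) (frobNorm_nonneg N))
  -- the `k`-th column of `M * N` is `M *ᵥ Nᵀ k`
  calc frobNorm (M * N) ^ 2 = ∑ k, ∑ i, ‖(M *ᵥ Nᵀ k) i‖ ^ 2 := by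
        rw [frobNorm_sq, Finset.sum_comm]; rfl
    _ ≤ ∑ k, specNorm M ^ 2 * ∑ j, ‖Nᵀ k j‖ ^ 2 :=
        Finset.sum_le_sum fun k _ => sum_norm_mulVec_sq_le M (Nᵀ k)
    _ = (specNorm M * frobNorm N) ^ 2 := by
        rw [mul_pow, frobNorm_sq, Finset.sum_comm, Finset.mul_sum]; rfl

theorem frobNorm_mul_le_mul_specNorm (M : Matrix (Fin a) (Fin b) ℂ)
    (N : Matrix (Fin b) (Fin d) ℂ) : frobNorm (M * N) ≤ frobNorm M * specNorm N := by
  simpa only [← Matrix.conjTranspose_mul, frobNorm_conjTranspose, specNorm_conjTranspose, mul_comm]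
    using frobNorm_mul_le_specNorm_mul Nᴴ Mᴴ

theorem frobNorm_mul_mul_le_specNorm_outer (C : Matrix (Fin a) (Fin b) ℂ)
    (X : Matrix (Fin b) (Fin d) ℂ) (B : Matrix (Fin d) (Fin e) ℂ) :
    frobNorm (C * X * B) ≤ specNorm C * frobNorm X * specNorm B :=
  calc frobNorm (C * X * B) ≤ frobNorm (C * X) * specNorm B := frobNorm_mul_le_mul_specNorm _ _
    _ ≤ specNorm C * frobNorm X * specNorm B := by
        gcongr
        · exact specNorm_nonneg B
        · exact frobNorm_mul_le_specNorm_mul C X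

theorem frobNorm_mul_mul_le_specNorm_middle (Ψ : Matrix (Fin a) (Fin b) ℂ)
    (Λ : Matrix (Fin b) (Fin d) ℂ) (Φ : Matrix (Fin d) (Fin e) ℂ) :
    frobNorm (Ψ * Λ * Φ) ≤ specNorm Λ * (frobNorm Ψ * frobNorm Φ) :=
  calc frobNorm (Ψ * Λ * Φ) ≤ frobNorm Ψ * frobNorm (Λ * Φ) := by
        rw [Matrix.mul_assoc]; exact frobNorm_mul_le _ _
    _ ≤ frobNorm Ψ * (specNorm Λ * frobNorm Φ) := by
        gcongr
        · exact frobNorm_nonneg Ψ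
        · exact frobNorm_mul_le_specNorm_mul Λ Φ
    _ = specNorm Λ * (frobNorm Ψ * frobNorm Φ) := by ring

theorem Matrix.conj_pow_of_isUnit {ι R : Type*} [Fintype ι] [DecidableEq ι] [CommRing R]
    {Ψ : Matrix ι ι R} (hΨ : IsUnit Ψ) (Λ : Matrix ι ι R) (k : ℕ) :
    (Ψ * Λ * Ψ⁻¹) ^ k = Ψ * Λ ^ k * Ψ⁻¹ := by
  obtain ⟨u, rfl⟩ := hΨ
  simpa only [Matrix.coe_units_inv] using Units.conj_pow u Λ k

theorem frobNorm_mul_conj_pow_mul_le {Ψ Λ : Matrix (Fin b) (Fin b) ℂ} (hΨ : IsUnit Ψ)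
    (hΛ : specNorm Λ ≤ 1) (C : Matrix (Fin a) (Fin b) ℂ) (B : Matrix (Fin b) (Fin d) ℂ) (k : ℕ) :
    frobNorm (C * (Ψ * Λ * Ψ⁻¹) ^ k * B) ≤
      specNorm C * (frobNorm Ψ * frobNorm Ψ⁻¹) * specNorm B := by
  rw [Matrix.conj_pow_of_isUnit hΨ]
  refine (frobNorm_mul_mul_le_specNorm_outer C _ B).trans ?_
  gcongr
  · exact specNorm_nonneg B
  · exact specNorm_nonneg C
  · calc frobNorm (Ψ * Λ ^ k * Ψ⁻¹) ≤ specNorm (Λ ^ k) * (frobNorm Ψ * frobNorm Ψ⁻¹) :=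
          frobNorm_mul_mul_le_specNorm_middle _ _ _
      _ ≤ frobNorm Ψ * frobNorm Ψ⁻¹ :=
          mul_le_of_le_one_left (mul_nonneg (frobNorm_nonneg _) (frobNorm_nonneg _))
            (specNorm_pow_le_one hΛ k)

theorem autoregressive_coefficient_matrices_bound_general
    (n m p τ : ℕ) (R_Θ R_Ψ R₁ : ℝ)
    (A Ψ Λ : Matrix (Fin n) (Fin n) ℂ)
    (B : Matrix (Fin n) (Fin m) ℂ)
    (C : Matrix (Fin p) (Fin n) ℂ)
    (c : ℕ → ℂ)
    (hc1 : (∑ j ∈ Finset.range (τ + 1), ‖c j‖) ≤ R₁)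
    (hΨ : IsUnit Ψ)
    (hA : A = Ψ * Λ * Ψ⁻¹)
    (hΛ : specNorm Λ ≤ 1)
    (hB : specNorm B ≤ R_Θ)
    (hC : specNorm C ≤ R_Θ)
    (hΨnorm : frobNorm Ψ * frobNorm Ψ⁻¹ ≤ R_Ψ) :
    ∀ i < τ,
      frobNorm (∑ j ∈ Finset.range (i + 1), c j • (C * A ^ (i - j) * B)) ≤
        R₁ * R_Θ ^ 2 * R_Ψ := by
  intro i hi
  have hRΘ : 0 ≤ R_Θ := (specNorm_nonneg B).trans hB
  have hRΨ : 0 ≤ R_Ψ := (mul_nonneg (frobNorm_nonneg _) (frobNorm_nonneg _)).trans hΨnorm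
  have hMarkov : ∀ j ∈ Finset.range (i + 1), frobNorm (C * A ^ (i - j) * B) ≤ R_Θ ^ 2 * R_Ψ := by
    intro j _
    calc frobNorm (C * A ^ (i - j) * B)
        ≤ specNorm C * (frobNorm Ψ * frobNorm Ψ⁻¹) * specNorm B :=
          hA ▸ frobNorm_mul_conj_pow_mul_le hΨ hΛ C B (i - j)
      _ ≤ R_Θ * R_Ψ * R_Θ := by
          gcongr
          · exact specNorm_nonneg B
          · exact mul_nonneg (frobNorm_nonneg Ψ) (frobNorm_nonneg Ψ⁻¹)
      _ = R_Θ ^ 2 * R_Ψ := by ring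
  have hc : ∑ j ∈ Finset.range (i + 1), ‖c j‖ ≤ R₁ :=
    (Finset.sum_le_sum_of_subset_of_nonneg (Finset.range_subset_range.mpr (by omega))
      fun j _ _ => norm_nonneg (c j)).trans hc1
  calc frobNorm (∑ j ∈ Finset.range (i + 1), c j • (C * A ^ (i - j) * B))
      ≤ (∑ j ∈ Finset.range (i + 1), ‖c j‖) * (R_Θ ^ 2 * R_Ψ) :=
        frobNorm_sum_smul_le_of_frobNorm_le _ c _ hMarkov
    _ ≤ R₁ * (R_Θ ^ 2 * R_Ψ) := by gcongr
    _ = R₁ * R_Θ ^ 2 * R_Ψ := by ring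

theorem autoregressive_coefficient_matrices_bound
    (n m p τ : ℕ) (R_Θ R_Ψ R₁ : ℝ)
    (A Ψ Λ : Matrix (Fin n) (Fin n) ℂ)
    (B : Matrix (Fin n) (Fin m) ℂ)
    (C : Matrix (Fin p) (Fin n) ℂ)
    (c : ℕ → ℂ) (hc0 : c 0 = 1)
    (hpA : (∑ j ∈ Finset.range (τ + 1), c j • A ^ (τ - j)) = 0)
    (hc1 : (∑ j ∈ Finset.range (τ + 1), ‖c j‖) ≤ R₁)
    (hΨ : IsUnit Ψ)
    (hA : A = Ψ * Λ * Ψ⁻¹)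
    (hΛdiag : Λ.IsDiag)
    (hΛ : specNorm Λ ≤ 1)
    (hB : specNorm B ≤ R_Θ)
    (hC : specNorm C ≤ R_Θ)
    (hΨnorm : frobNorm Ψ * frobNorm Ψ⁻¹ ≤ R_Ψ) :
    ∀ i < τ,
      frobNorm (∑ j ∈ Finset.range (i + 1), c j • (C * A ^ (i - j) * B)) ≤
        R₁ * R_Θ ^ 2 * R_Ψ :=
  autoregressive_coefficient_matrices_bound_general n m p τ R_Θ R_Ψ R₁ A Ψ Λ B C c hc1 hΨ hA hΛ hB
    hC hΨnorm
end
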